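/- Let Σ = {M, P, O, A, X} and let E be the set of all unordered pairs of labels from Σ except {M,M}, {A,A}, {P,P}, {P,A}, {P,O}. Call an ordered pair (A₁, A₂) of nonempty subsets of Σ compatible if {a₁, a₂} ∈ E for every a₁ ∈ A₁ and a₂ ∈ A₂, and call a compatible pair maximal if there is no compatible pair (A₁', A₂') with A₁ ⊆ A₁' and A₂ ⊆ A₂' where at least one inclusion is strict. Then the maximal compatible pairs are exactly the following four pairs together with their swaps: ({X}, {M,P,A,O,X}), ({M,X}, {P,A,O,X}), ({O,X}, {M,A,O,X}), and ({M,O,X}, {A,O,X}). -/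

import Mathlib

inductive Lab : Type
  | M | P | O | A | X
  deriving DecidableEq

instance instFintypeLab : Fintype Lab :=
  ⟨{Lab.M, Lab.P, Lab.O, Lab.A, Lab.X}, by intro x; cases x <;> simp⟩

/-- Node constraint `N_Δ(a,x)`: the three allowed multisets of size `Δ`. -/
def nodeC (Δ a x : ℕ) (m : Multiset Lab) : Prop :=
  m = Multiset.replicate (Δ - x) Lab.M + Multiset.replicate x Lab.X ∨
  m = Multiset.replicate a Lab.A + Multiset.replicate (Δ - a) Lab.X ∨
  m = Lab.P ::ₘ Multiset.replicate (Δ - 1) Lab.O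

/-- Edge constraint `E`: all unordered pairs except `{M,M}, {A,A}, {P,P}, {P,A}, {P,O}`. -/
def edgeC (l₁ l₂ : Lab) : Prop :=
  ¬ ((l₁ = Lab.M ∧ l₂ = Lab.M) ∨ (l₁ = Lab.A ∧ l₂ = Lab.A) ∨ (l₁ = Lab.P ∧ l₂ = Lab.P) ∨
     (l₁ = Lab.P ∧ l₂ = Lab.A) ∨ (l₁ = Lab.A ∧ l₂ = Lab.P) ∨
     (l₁ = Lab.P ∧ l₂ = Lab.O) ∨ (l₁ = Lab.O ∧ l₂ = Lab.P))

instance (l₁ l₂ : Lab) : Decidable (edgeC l₁ l₂) := by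
  unfold edgeC; infer_instance

/-- A valid `Π_Δ(a,x)`-labeling: `ℓ u v` is the label that `u` assigns to the edge `{u,v}`. -/
def validLabeling {V : Type*} [Fintype V] (G : SimpleGraph V) [DecidableRel G.Adj]
    (Δ a x : ℕ) (ℓ : V → V → Lab) : Prop :=
  (∀ v : V, nodeC Δ a x ((G.neighborFinset v).val.map (ℓ v))) ∧
  (∀ u v : V, G.Adj u v → edgeC (ℓ u v) (ℓ v u))

/-- An ordered pair of nonempty label sets is *compatible* if all its cross pairs
lie in the edge constraint `E`. -/
def compatPair (A₁ A₂ : Finset Lab) : Prop :=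
  A₁.Nonempty ∧ A₂.Nonempty ∧ ∀ a₁ ∈ A₁, ∀ a₂ ∈ A₂, edgeC a₁ a₂

/-- A compatible pair is *maximal* if no compatible pair strictly extends it. -/
def maxCompatPair (A₁ A₂ : Finset Lab) : Prop :=
  compatPair A₁ A₂ ∧
    ¬ ∃ A₁' A₂' : Finset Lab,
        compatPair A₁' A₂' ∧ A₁ ⊆ A₁' ∧ A₂ ⊆ A₂' ∧ (A₁ ⊂ A₁' ∨ A₂ ⊂ A₂')

/-! The whole proof is a finite check over the `2⁵ × 2⁵` pairs of label sets. To make it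
decidable without quantifying over all larger pairs, maximality is first reduced to the
impossibility of adding a single label to either side, since compatibility is inherited
by nonempty subsets. -/

instance (A₁ A₂ : Finset Lab) : Decidable (compatPair A₁ A₂) := by
  unfold compatPair; infer_instance

theorem compatPair.mono {A₁ A₂ B₁ B₂ : Finset Lab} (h : compatPair B₁ B₂)
    (h₁ : A₁ ⊆ B₁) (h₂ : A₂ ⊆ B₂) (hA₁ : A₁.Nonempty) (hA₂ : A₂.Nonempty) :
    compatPair A₁ A₂ :=
  ⟨hA₁, hA₂, fun a ha b hb => h.2.2 a (h₁ ha) b (h₂ hb)⟩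

theorem maxCompatPair_iff_forall_insert (A₁ A₂ : Finset Lab) :
    maxCompatPair A₁ A₂ ↔ compatPair A₁ A₂ ∧
      (∀ l ∉ A₁, ¬ compatPair (insert l A₁) A₂) ∧
      (∀ l ∉ A₂, ¬ compatPair A₁ (insert l A₂)) := by
  constructor
  · rintro ⟨hc, hmax⟩
    refine ⟨hc, fun l hl hcl => hmax ?_, fun l hl hcl => hmax ?_⟩
    · exact ⟨_, _, hcl, Finset.subset_insert _ _, subset_rfl, .inl (Finset.ssubset_insert hl)⟩
    · exact ⟨_, _, hcl, subset_rfl, Finset.subset_insert _ _, .inr (Finset.ssubset_insert hl)⟩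
  · rintro ⟨hc, hins₁, hins₂⟩
    refine ⟨hc, ?_⟩
    rintro ⟨B₁, B₂, hB, hsub₁, hsub₂, hssub₁ | hssub₂⟩
    · obtain ⟨l, hlB, hlA⟩ := Finset.exists_of_ssubset hssub₁
      exact hins₁ l hlA <|
        hB.mono (Finset.insert_subset hlB hsub₁) hsub₂ (Finset.insert_nonempty _ _) hc.2.1
    · obtain ⟨l, hlB, hlA⟩ := Finset.exists_of_ssubset hssub₂
      exact hins₂ l hlA <|
        hB.mono hsub₁ (Finset.insert_subset hlB hsub₂) hc.1 (Finset.insert_nonempty _ _)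

/-- The maximal compatible pairs are exactly the four listed pairs
together with their swaps. -/
theorem stmt_1 (A₁ A₂ : Finset Lab) :
    maxCompatPair A₁ A₂ ↔
      (A₁, A₂) ∈ ({(({Lab.X} : Finset Lab), ({Lab.M, Lab.P, Lab.A, Lab.O, Lab.X} : Finset Lab)),
                   ({Lab.M, Lab.P, Lab.A, Lab.O, Lab.X}, {Lab.X}),
                   ({Lab.M, Lab.X}, {Lab.P, Lab.A, Lab.O, Lab.X}),
                   ({Lab.P, Lab.A, Lab.O, Lab.X}, {Lab.M, Lab.X}),
                   ({Lab.O, Lab.X}, {Lab.M, Lab.A, Lab.O, Lab.X}),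
                   ({Lab.M, Lab.A, Lab.O, Lab.X}, {Lab.O, Lab.X}),
                   ({Lab.M, Lab.O, Lab.X}, {Lab.A, Lab.O, Lab.X}),
                   ({Lab.A, Lab.O, Lab.X}, {Lab.M, Lab.O, Lab.X})} :
          Set (Finset Lab × Finset Lab)) := by
  rw [maxCompatPair_iff_forall_insert]
  simp only [Set.mem_insert_iff, Set.mem_singleton_iff, Prod.mk.injEq]
  revert A₁ A₂
  decide
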